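/- Let G be a nontrivial finite cyclic group of order n with generator set S. The metric dimension of the generator graph Γ(G) equals n−1 if n = |S|+1, and equals n−2 if n ≥ |S|+2. -/

import Mathlib

/-- The generator graph of a group: vertices are group elements, two distinct
vertices are adjacent iff at least one of them generates the group. -/
def genGraph (G : Type*) [Group G] : SimpleGraph G where
  Adj x y := x ≠ y ∧ (Subgroup.zpowers x = ⊤ ∨ Subgroup.zpowers y = ⊤)
  symm := by
    constructor
    intro x y h
    exact ⟨h.1.symm, h.2.symm⟩
  loopless := by
    constructor
    intro x h
    exact h.1 rfl

noncomputable instance {G : Type*} [Group G] [Fintype G] (x : G) :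
    Fintype ((genGraph G).neighborSet x) := Fintype.ofFinite _

-- The set of generators of `G`, as a finset.
open Classical in
noncomputable def gens (G : Type*) [Group G] [Fintype G] : Finset G :=
  Finset.univ.filter fun x => Subgroup.zpowers x = ⊤

-- The metric dimension of a graph: the least cardinality of a resolving set,
-- i.e. a set `W` of vertices such that distinct vertices have distinct
-- vectors of distances to the elements of `W`.
noncomputable def metricDim {V : Type*} [Fintype V] (Γ : SimpleGraph V) : ℕ :=
  sInf {k | ∃ W : Finset V, W.card = k ∧
    ∀ u v : V, (∀ w ∈ W, Γ.dist u w = Γ.dist v w) → u = v}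

section Aux

set_option linter.unusedSectionVars false
variable {G : Type*} [Group G] [Fintype G] [IsCyclic G] [Nontrivial G]

lemma mem_gens_iff (x : G) : x ∈ gens G ↔ Subgroup.zpowers x = ⊤ := by
  simp [gens]

lemma exists_gen' : ∃ g : G, Subgroup.zpowers g = ⊤ := by
  obtain ⟨g, hg⟩ := IsCyclic.exists_generator (α := G)
  exact ⟨g, Subgroup.eq_top_iff' _ |>.mpr hg⟩

lemma gen_ne_one {x : G} (hx : Subgroup.zpowers x = ⊤) : x ≠ 1 := by
  rintro rfl
  rw [Subgroup.zpowers_one_eq_bot] at hx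
  exact bot_ne_top hx

lemma genDist_one {x y : G} (h : x ≠ y)
    (hg : Subgroup.zpowers x = ⊤ ∨ Subgroup.zpowers y = ⊤) :
    (genGraph G).dist x y = 1 :=
  SimpleGraph.dist_eq_one_iff_adj.mpr ⟨h, hg⟩

lemma genDist_two {x y : G} (h : x ≠ y)
    (hx : ¬ Subgroup.zpowers x = ⊤) (hy : ¬ Subgroup.zpowers y = ⊤) :
    (genGraph G).dist x y = 2 := by
  obtain ⟨g, hg⟩ := exists_gen' (G := G)
  have hgx : g ≠ x := fun e => hx (e ▸ hg)
  have hgy : g ≠ y := fun e => hy (e ▸ hg)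
  have a1 : (genGraph G).Adj x g := ⟨hgx.symm, Or.inr hg⟩
  have a2 : (genGraph G).Adj g y := ⟨hgy, Or.inl hg⟩
  have p : (genGraph G).Walk x y := SimpleGraph.Walk.cons a1 (SimpleGraph.Walk.cons a2 SimpleGraph.Walk.nil)
  have hle : (genGraph G).dist x y ≤ 2 := by
    have := SimpleGraph.dist_le (SimpleGraph.Walk.cons a1 (SimpleGraph.Walk.cons a2 SimpleGraph.Walk.nil))
    simpa using this
  have h0 : (genGraph G).dist x y ≠ 0 := by
    intro h0
    rcases SimpleGraph.dist_eq_zero_iff_eq_or_not_reachable.mp h0 with he | hr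
    · exact h he
    · exact hr ⟨p⟩
  have h1 : (genGraph G).dist x y ≠ 1 := by
    intro h1
    obtain ⟨-, hc⟩ := SimpleGraph.dist_eq_one_iff_adj.mp h1
    rcases hc with hc | hc
    · exact hx hc
    · exact hy hc
  omega

lemma genDist_ne_zero {x y : G} (h : x ≠ y) : (genGraph G).dist x y ≠ 0 := by
  by_cases hx : Subgroup.zpowers x = ⊤
  · rw [genDist_one h (Or.inl hx)]; omega
  by_cases hy : Subgroup.zpowers y = ⊤
  · rw [genDist_one h (Or.inr hy)]; omega
  · rw [genDist_two h hx hy]; omega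

end Aux

theorem stmt18 {G : Type*} [Group G] [Fintype G] [IsCyclic G] [Nontrivial G] :
    (Fintype.card G = (gens G).card + 1 →
      metricDim (genGraph G) = Fintype.card G - 1) ∧
    ((gens G).card + 2 ≤ Fintype.card G →
      metricDim (genGraph G) = Fintype.card G - 2) := by
  classical
  set n := Fintype.card G with hn
  have hcard_gens : (gens G).card ≤ n := by
    simpa [hn] using Finset.card_le_univ (gens G)
  -- the resolving-set predicate
  set A : Set ℕ := {k | ∃ W : Finset G, W.card = k ∧
    ∀ u v : G, (∀ w ∈ W, (genGraph G).dist u w = (genGraph G).dist v w) → u = v} with hA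
  have hmemW : ∀ (W : Finset G)
      (_ : ∀ u v : G, (∀ w ∈ W, (genGraph G).dist u w = (genGraph G).dist v w) → u = v),
      W.card ∈ A := fun W h => ⟨W, rfl, h⟩
  -- If u is in a resolving set W and distances agree, then v = u
  have key : ∀ (W : Finset G) (u v : G),
      (∀ w ∈ W, (genGraph G).dist u w = (genGraph G).dist v w) → u ∈ W → u = v := by
    intro W u v h hu
    by_contra hne
    have := h u hu
    rw [SimpleGraph.dist_self] at this
    exact genDist_ne_zero (fun e => hne e.symm) this.symm
  constructor
  · -- case n = |gens| + 1 : the graph is complete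
    intro hcase
    -- nongens = {1}
    have h1 : (1 : G) ∉ gens G := by
      rw [mem_gens_iff]
      rw [Subgroup.zpowers_one_eq_bot]
      exact bot_ne_top
    have hnong : Finset.univ \ gens G = {1} := by
      have hcard1 : (Finset.univ \ gens G).card = 1 := by
        have := Finset.card_sdiff_add_card_eq_card (Finset.subset_univ (gens G))
        rw [Finset.card_univ] at this
        omega
      obtain ⟨a, ha⟩ := Finset.card_eq_one.mp hcard1
      have h1mem : (1:G) ∈ Finset.univ \ gens G := by simp [h1]
      rw [ha] at h1mem ⊢
      simp only [Finset.mem_singleton] at h1mem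
      rw [h1mem]
    have hcomplete : ∀ x y : G, x ≠ y → (genGraph G).dist x y = 1 := by
      intro x y hxy
      by_cases hx : Subgroup.zpowers x = ⊤
      · exact genDist_one hxy (Or.inl hx)
      by_cases hy : Subgroup.zpowers y = ⊤
      · exact genDist_one hxy (Or.inr hy)
      · exfalso
        have hx1 : x ∈ Finset.univ \ gens G := by simp [mem_gens_iff, hx]
        have hy1 : y ∈ Finset.univ \ gens G := by simp [mem_gens_iff, hy]
        rw [hnong] at hx1 hy1
        simp only [Finset.mem_singleton] at hx1 hy1
        exact hxy (hx1.trans hy1.symm)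
    -- upper bound: univ.erase 1 resolves
    have hmem : n - 1 ∈ A := by
      have hres : ∀ u v : G,
          (∀ w ∈ Finset.univ.erase (1 : G), (genGraph G).dist u w = (genGraph G).dist v w)
          → u = v := by
        intro u v h
        by_contra hne
        have hu : u ∉ Finset.univ.erase (1 : G) := fun hu => hne (key _ u v h hu)
        have hv : v ∉ Finset.univ.erase (1 : G) := fun hv => hne ((key _ v u
          (fun w hw => (h w hw).symm) hv)).symm
        simp only [Finset.mem_erase, Finset.mem_univ, and_true, not_not] at hu hv
        exact hne (hu.trans hv.symm)
      have := hmemW _ hres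
      rwa [Finset.card_erase_of_mem (Finset.mem_univ _), Finset.card_univ] at this
    -- lower bound
    have hlb : ∀ k ∈ A, n - 1 ≤ k := by
      rintro k ⟨W, rfl, hres⟩
      have hT : (Finset.univ \ W).card ≤ 1 := by
        rw [Finset.card_le_one]
        intro a ha b hb
        by_contra hab
        apply hab
        apply hres
        intro w hw
        have haw : a ≠ w := by rintro rfl; simp [hw] at ha
        have hbw : b ≠ w := by rintro rfl; simp [hw] at hb
        rw [hcomplete a w haw, hcomplete b w hbw]
      have := Finset.card_sdiff_add_card_eq_card (Finset.subset_univ W)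
      rw [Finset.card_univ] at this
      omega
    exact le_antisymm (Nat.sInf_le hmem) (le_csInf ⟨_, hmem⟩ hlb)
  · -- case |gens| + 2 ≤ n
    intro hcase
    obtain ⟨g, hg⟩ := exists_gen' (G := G)
    have hg1 : g ≠ 1 := gen_ne_one hg
    have h1g : (1 : G) ∉ gens G := by
      rw [mem_gens_iff, Subgroup.zpowers_one_eq_bot]
      exact bot_ne_top
    -- there are at least two non-generators
    have hnongcard : 2 ≤ (Finset.univ \ gens G).card := by
      have := Finset.card_sdiff_add_card_eq_card (Finset.subset_univ (gens G))
      rw [Finset.card_univ] at this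
      omega
    obtain ⟨w0, hw0mem, hw0ne⟩ := Finset.exists_mem_ne (s := Finset.univ \ gens G) (by omega) (1 : G)
    have hw0g : w0 ∉ gens G := (Finset.mem_sdiff.mp hw0mem).2
    have hw0gen : ¬ Subgroup.zpowers w0 = ⊤ := fun h => hw0g ((mem_gens_iff w0).mpr h)
    have hw0neg : w0 ≠ g := fun e => hw0gen (e ▸ hg)
    have hmem : n - 2 ∈ A := by
      have hres : ∀ u v : G,
          (∀ w ∈ Finset.univ \ {g, (1:G)}, (genGraph G).dist u w = (genGraph G).dist v w)
          → u = v := by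
        intro u v h
        by_contra hne
        have hu : u ∉ Finset.univ \ {g, (1:G)} := fun hu => hne (key _ u v h hu)
        have hv : v ∉ Finset.univ \ {g, (1:G)} := fun hv => hne ((key _ v u
          (fun w hw => (h w hw).symm) hv)).symm
        simp only [Finset.mem_sdiff, Finset.mem_univ, true_and, not_not,
          Finset.mem_insert, Finset.mem_singleton] at hu hv
        have hw0W : w0 ∈ Finset.univ \ {g, (1:G)} := by
          simp [hw0neg, hw0ne]
        have hd := h w0 hw0W
        have hdg : (genGraph G).dist g w0 = 1 := genDist_one (Ne.symm hw0neg) (Or.inl hg)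
        have hd1 : (genGraph G).dist 1 w0 = 2 := by
          apply genDist_two (Ne.symm hw0ne) _ hw0gen
          rw [Subgroup.zpowers_one_eq_bot]
          exact bot_ne_top
        rcases hu with rfl | rfl <;> rcases hv with rfl | rfl
        · exact hne rfl
        · rw [hdg, hd1] at hd; omega
        · rw [hdg, hd1] at hd; omega
        · exact hne rfl
      have := hmemW _ hres
      rwa [Finset.card_sdiff_of_subset (Finset.subset_univ _), Finset.card_univ,
        Finset.card_insert_of_notMem (by simpa using hg1), Finset.card_singleton] at this
    have hlb : ∀ k ∈ A, n - 2 ≤ k := by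
      rintro k ⟨W, rfl, hres⟩
      set T := Finset.univ \ W with hT
      have hTg : (T.filter (fun x => Subgroup.zpowers x = ⊤)).card ≤ 1 := by
        rw [Finset.card_le_one]
        intro a ha b hb
        simp only [Finset.mem_filter, hT, Finset.mem_sdiff] at ha hb
        by_contra hab
        apply hab
        apply hres
        intro w hw
        have haw : a ≠ w := by rintro rfl; exact ha.1.2 hw
        have hbw : b ≠ w := by rintro rfl; exact hb.1.2 hw
        rw [genDist_one haw (Or.inl ha.2), genDist_one hbw (Or.inl hb.2)]
      have hTn : (T.filter (fun x => ¬ Subgroup.zpowers x = ⊤)).card ≤ 1 := by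
        rw [Finset.card_le_one]
        intro a ha b hb
        simp only [Finset.mem_filter, hT, Finset.mem_sdiff] at ha hb
        by_contra hab
        apply hab
        apply hres
        intro w hw
        have haw : a ≠ w := by rintro rfl; exact ha.1.2 hw
        have hbw : b ≠ w := by rintro rfl; exact hb.1.2 hw
        by_cases hwg : Subgroup.zpowers w = ⊤
        · rw [genDist_one haw (Or.inr hwg), genDist_one hbw (Or.inr hwg)]
        · rw [genDist_two haw ha.2 hwg, genDist_two hbw hb.2 hwg]
      have hTcard : T.card ≤ 2 := by
        have := Finset.card_filter_add_card_filter_not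
          (s := T) (p := fun x => Subgroup.zpowers x = ⊤)
        omega
      have := Finset.card_sdiff_add_card_eq_card (Finset.subset_univ W)
      rw [← hT, Finset.card_univ] at this
      omega
    exact le_antisymm (Nat.sInf_le hmem) (le_csInf ⟨_, hmem⟩ hlb)
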